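/- For each fixed row index s, the number of t with 0 ≤ t ≤ s such that C(s,t) ≡ 1 (mod 4) minus the number of t with C(s,t) ≡ 3 (mod 4) equals either 2^{ds(s)} (if no entry is ≡ 3 mod 4) or 0; in particular if some C(s,t) ≡ 3 (mod 4), then the number of entries ≡ 1 mod 4 equals the number ≡ 3 mod 4 in row s. -/
import Mathlib

open Polynomial


private lemma h4 : (4 : (ZMod 4)[X]) = 0 := by
  rw [show (4:(ZMod 4)[X]) = Polynomial.C 4 from by rw [map_ofNat]]
  rw [show (4:ZMod 4) = 0 from rfl, map_zero]

private lemma poly_key (m : ℕ) : (1+X : (ZMod 4)[X])^(2*(m+1)) =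
    (1+X^2)^(m+1) + Polynomial.C ((2*(m+1) : ℕ) : ZMod 4) * (X * (1+X^2)^m) := by
  induction m with
  | zero => rw [map_natCast]; push_cast; ring
  | succ n ih =>
    rw [show 2*(n+1+1) = 2*(n+1) + 2 from by ring, pow_add, ih, map_natCast, map_natCast]
    push_cast
    linear_combination (((n:(ZMod 4)[X])+1) * X^2 * (1+X^2)^n) * h4

private lemma coeff_sq (m k : ℕ) : ((1+X^2 : (ZMod 4)[X])^m).coeff k =
    if 2 ∣ k then ((m.choose (k/2) : ℕ) : ZMod 4) else 0 := by
  have h : (1+X^2 : (ZMod 4)[X])^m = Polynomial.expand (ZMod 4) 2 ((1+X)^m) := by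
    rw [map_pow, map_add, map_one, Polynomial.expand_X]
  rw [h, Polynomial.coeff_expand two_pos]
  split <;> simp [Polynomial.coeff_one_add_X_pow]

private lemma castA (m k : ℕ) : ((Nat.choose (2*(m+1)) (2*k) : ℕ) : ZMod 4) = ((Nat.choose (m+1) k : ℕ) : ZMod 4) := by
  have h := congrArg (fun p => Polynomial.coeff p (2*k)) (poly_key m)
  simp only [Polynomial.coeff_add, Polynomial.coeff_C_mul] at h
  rw [coeff_sq] at h
  rw [show (1+X : (ZMod 4)[X]) = X + 1 from by ring, Polynomial.coeff_X_add_one_pow] at h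
  have hx : (X * ((1+X^2 : (ZMod 4)[X])^m)).coeff (2*k) = 0 := by
    cases k with
    | zero => simp
    | succ j =>
      rw [show 2*(j+1) = (2*j+1)+1 from by ring, Polynomial.coeff_X_mul, coeff_sq]
      simp [Nat.two_dvd_ne_zero.mpr]
  rw [hx, mul_zero, add_zero] at h
  simpa using h

private lemma castB (m k : ℕ) : ((Nat.choose (2*(m+1)) (2*k+1) : ℕ) : ZMod 4) =
    (((2*(m+1)) * Nat.choose m k : ℕ) : ZMod 4) := by
  have h := congrArg (fun p => Polynomial.coeff p (2*k+1)) (poly_key m)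
  simp only [Polynomial.coeff_add, Polynomial.coeff_C_mul] at h
  rw [Polynomial.coeff_X_mul, coeff_sq, coeff_sq] at h
  rw [show (1+X : (ZMod 4)[X]) = X + 1 from by ring, Polynomial.coeff_X_add_one_pow] at h
  rw [if_neg (by omega), if_pos ⟨k, by ring⟩] at h
  rw [show 2*k/2 = k from by omega] at h
  push_cast at h ⊢
  rw [h]; ring

private lemma modA (m k : ℕ) : Nat.choose (2*m) (2*k) % 4 = Nat.choose m k % 4 := by
  cases m with
  | zero => cases k <;> simp [Nat.choose_eq_zero_of_lt]
  | succ n => exact (ZMod.natCast_eq_natCast_iff' _ _ 4).mp (castA n k)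

private lemma modB (m k : ℕ) : Nat.choose (2*m) (2*k+1) % 4 = (2*m * Nat.choose (m-1) k) % 4 := by
  cases m with
  | zero => simp [Nat.choose_eq_zero_of_lt]
  | succ n => simpa using (ZMod.natCast_eq_natCast_iff' _ _ 4).mp (castB n k)

private lemma sum_even_odd (f : ℕ → ℕ) (n : ℕ) :
    ∑ t ∈ Finset.range (2*n), f t = ∑ k ∈ Finset.range n, (f (2*k) + f (2*k+1)) := by
  induction n with
  | zero => simp
  | succ n ih =>
    rw [show 2*(n+1) = 2*n+1+1 from by ring, Finset.sum_range_succ, Finset.sum_range_succ,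
      ih, Finset.sum_range_succ]
    omega

private lemma ds_two_mul (m : ℕ) (hm : m ≠ 0) : (Nat.digits 2 (2*m)).sum = (Nat.digits 2 m).sum := by
  rw [Nat.digits_def' (by norm_num) (by omega)]
  simp [Nat.mul_div_cancel_left _ (by norm_num : 0 < 2), Nat.mul_mod_right]

private lemma ds_odd (m : ℕ) : (Nat.digits 2 (2*m+1)).sum = (Nat.digits 2 m).sum + 1 := by
  rw [Nat.digits_def' (by norm_num) (by omega)]
  rw [show (2*m+1)/2 = m from by omega, show (2*m+1) % 2 = 1 from by omega]
  simp
  omega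

private def cnt (r s : ℕ) : ℕ := ((Finset.range (s+1)).filter (fun t => Nat.choose s t % 4 = r)).card

private lemma cnt_eq (r s : ℕ) :
    cnt r s = ∑ t ∈ Finset.range (s+1), if Nat.choose s t % 4 = r then 1 else 0 :=
  Finset.card_filter _ _

private lemma cnt_two_mul (r m : ℕ) (hr : r = 1 ∨ r = 3) : cnt r (2*m) = cnt r m := by
  rw [cnt_eq, cnt_eq, Finset.sum_range_succ, sum_even_odd, Finset.sum_range_succ]
  congr 1
  · refine Finset.sum_congr rfl fun k hk => ?_
    have h2 : (if Nat.choose (2*m) (2*k+1) % 4 = r then 1 else 0) = 0 := by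
      apply if_neg
      have hb := modB m k
      rw [show 2*m*Nat.choose (m-1) k = 2*(m*Nat.choose (m-1) k) from by ring] at hb
      generalize m * Nat.choose (m-1) k = z at hb
      rcases hr with rfl | rfl <;> omega
    rw [modA, h2, add_zero]
  · rw [show 2*m = 2*m from rfl]
    rw [show Nat.choose (2*m) (2*m) % 4 = Nat.choose m m % 4 from by
      simpa using modA m m]

private lemma cnt_odd_split (r m : ℕ) : cnt r (2*m+1) =
    (if 1 % 4 = r then 1 else 0) + (if (2*m+1) % 4 = r then 1 else 0) +
    ∑ j ∈ Finset.range m,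
      ((if (Nat.choose (2*m) (2*j+1) + Nat.choose (2*m) (2*j+2)) % 4 = r then 1 else 0) +
       (if (Nat.choose (2*m) (2*j+2) + Nat.choose (2*m) (2*j+3)) % 4 = r then 1 else 0)) := by
  rw [cnt_eq, show 2*m+1+1 = 2*(m+1) from by ring, sum_even_odd, Finset.sum_range_succ']
  have h0 : (if Nat.choose (2*m+1) (2*0) % 4 = r then 1 else 0)
      + (if Nat.choose (2*m+1) (2*0+1) % 4 = r then 1 else 0)
      = (if 1 % 4 = r then 1 else 0) + (if (2*m+1) % 4 = r then 1 else 0) := by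
    norm_num
  rw [h0]
  have hs : ∀ j ∈ Finset.range m,
      ((if Nat.choose (2*m+1) (2*(j+1)) % 4 = r then 1 else 0)
        + (if Nat.choose (2*m+1) (2*(j+1)+1) % 4 = r then 1 else 0) : ℕ)
      = ((if (Nat.choose (2*m) (2*j+1) + Nat.choose (2*m) (2*j+2)) % 4 = r then 1 else 0)
        + (if (Nat.choose (2*m) (2*j+2) + Nat.choose (2*m) (2*j+3)) % 4 = r then 1 else 0)) := by
    intro j hj
    have e1 : Nat.choose (2*m+1) (2*(j+1)) = Nat.choose (2*m) (2*j+1) + Nat.choose (2*m) (2*j+2) := by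
      rw [show 2*(j+1) = (2*j+1)+1 from by ring]
      exact Nat.choose_succ_succ _ _
    have e2 : Nat.choose (2*m+1) (2*(j+1)+1) = Nat.choose (2*m) (2*j+2) + Nat.choose (2*m) (2*j+3) := by
      rw [show 2*(j+1)+1 = (2*j+2)+1 from by ring]
      exact Nat.choose_succ_succ _ _
    rw [e1, e2]
  rw [Finset.sum_congr rfl hs]
  exact add_comm _ _

private lemma entry1_mod (m j : ℕ) :
    (Nat.choose (2*m) (2*j+1) + Nat.choose (2*m) (2*j+2)) % 4
      = (2*m*Nat.choose (m-1) j + Nat.choose m (j+1)) % 4 := by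
  have hb := modB m j
  have ha := modA m (j+1)
  rw [show 2*(j+1) = 2*j+2 from by ring] at ha
  omega

private lemma entry2_mod (m j : ℕ) :
    (Nat.choose (2*m) (2*j+2) + Nat.choose (2*m) (2*j+3)) % 4
      = (Nat.choose m (j+1) + 2*m*Nat.choose (m-1) (j+1)) % 4 := by
  have hb := modB m (j+1)
  have ha := modA m (j+1)
  rw [show 2*(j+1) = 2*j+2 from by ring] at ha
  rw [show 2*(j+1)+1 = 2*j+3 from by ring] at hb
  omega

private lemma cnt_odd_of_even (r u : ℕ) : cnt r (2*(2*u)+1) = 2 * cnt r (2*u) := by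
  rw [cnt_odd_split, cnt_eq, Finset.sum_range_succ']
  have hmod : (2*(2*u)+1) % 4 = 1 % 4 := by omega
  rw [hmod]
  have hs : ∀ j ∈ Finset.range (2*u),
      ((if (Nat.choose (2*(2*u)) (2*j+1) + Nat.choose (2*(2*u)) (2*j+2)) % 4 = r then 1 else 0)
        + (if (Nat.choose (2*(2*u)) (2*j+2) + Nat.choose (2*(2*u)) (2*j+3)) % 4 = r then 1 else 0) : ℕ)
      = 2 * (if Nat.choose (2*u) (j+1) % 4 = r then 1 else 0) := by
    intro j hj
    have h1 := entry1_mod (2*u) j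
    have h2 := entry2_mod (2*u) j
    rw [show 2*(2*u)*Nat.choose (2*u-1) j = 4*(u*Nat.choose (2*u-1) j) from by ring] at h1
    rw [show 2*(2*u)*Nat.choose (2*u-1) (j+1) = 4*(u*Nat.choose (2*u-1) (j+1)) from by ring] at h2
    have h1' : (Nat.choose (2*(2*u)) (2*j+1) + Nat.choose (2*(2*u)) (2*j+2)) % 4
        = Nat.choose (2*u) (j+1) % 4 := by omega
    have h2' : (Nat.choose (2*(2*u)) (2*j+2) + Nat.choose (2*(2*u)) (2*j+3)) % 4
        = Nat.choose (2*u) (j+1) % 4 := by omega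
    rw [h1', h2']
    split <;> omega
  rw [Finset.sum_congr rfl hs, ← Finset.mul_sum]
  have : Nat.choose (2*u) 0 % 4 = 1 % 4 := by norm_num
  rw [this]
  generalize (if (1:ℕ) % 4 = r then (1:ℕ) else 0) = A
  generalize (∑ j ∈ Finset.range (2*u), if Nat.choose (2*u) (j+1) % 4 = r then (1:ℕ) else 0) = S
  ring

private lemma cnt_odd_of_odd (u : ℕ) :
    cnt 1 (2*(2*u+1)+1) = cnt 3 (2*(2*u+1)+1) ∧ cnt 3 (2*(2*u+1)+1) ≠ 0 := by
  have key : ∀ j ∈ Finset.range (2*u+1), ∀ r : ℕ, (r = 1 ∨ r = 3) →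
      ((if (Nat.choose (2*(2*u+1)) (2*j+1) + Nat.choose (2*(2*u+1)) (2*j+2)) % 4 = r then 1 else 0)
        + (if (Nat.choose (2*(2*u+1)) (2*j+2) + Nat.choose (2*(2*u+1)) (2*j+3)) % 4 = r then 1 else 0) : ℕ)
      = (if (Nat.choose (2*u+1) (j+1) % 2 = 1) then 1 else 0) := by
    intro j hj r hr
    have h1 := entry1_mod (2*u+1) j
    have h2 := entry2_mod (2*u+1) j
    simp only [show 2*u+1-1 = 2*u from by omega] at h1 h2
    have hp : Nat.choose (2*u) j + Nat.choose (2*u) (j+1) = Nat.choose (2*u+1) (j+1) :=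
      (Nat.choose_succ_succ _ _).symm
    rw [show 2*(2*u+1)*Nat.choose (2*u) j = 4*(u*Nat.choose (2*u) j) + 2*Nat.choose (2*u) j from by ring] at h1
    rw [show 2*(2*u+1)*Nat.choose (2*u) (j+1) = 4*(u*Nat.choose (2*u) (j+1)) + 2*Nat.choose (2*u) (j+1) from by ring] at h2
    generalize u*Nat.choose (2*u) j = z1 at h1
    generalize u*Nat.choose (2*u) (j+1) = z2 at h2
    generalize hA : Nat.choose (2*u+1) (j+1) = a at hp
    generalize Nat.choose (2*u) j = b at h1 hp
    generalize Nat.choose (2*u) (j+1) = c at h2 hp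
    rcases hr with rfl | rfl <;> split_ifs <;> omega
  constructor
  · rw [cnt_odd_split, cnt_odd_split]
    rw [Finset.sum_congr rfl (fun j hj => key j hj 1 (Or.inl rfl)),
        Finset.sum_congr rfl (fun j hj => key j hj 3 (Or.inr rfl))]
    have : (2*(2*u+1)+1) % 4 = 3 := by omega
    rw [this]
    norm_num
  · rw [cnt_odd_split]
    have : (2*(2*u+1)+1) % 4 = 3 := by omega
    rw [this]
    norm_num

private lemma cnt_def (r s : ℕ) : cnt r s = ((Finset.range (s+1)).filter (fun t => Nat.choose s t % 4 = r)).card := rfl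

private lemma main (s : ℕ) :
    (cnt 1 s = 2^((Nat.digits 2 s).sum) ∧ cnt 3 s = 0) ∨ (cnt 1 s = cnt 3 s ∧ cnt 3 s ≠ 0) := by
  induction s using Nat.strong_induction_on with
  | _ s ih =>
    rcases Nat.even_or_odd s with ⟨m, hm⟩ | ⟨m, hm⟩
    · rcases Nat.eq_zero_or_pos m with rfl | hmpos
      · left
        constructor
        · rw [show s = 0 from by omega]
          rw [cnt_def]
          norm_num [Finset.filter_singleton, Finset.range_one]
        · rw [show s = 0 from by omega, cnt_def]
          rw [Finset.card_eq_zero, Finset.filter_eq_empty_iff]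
          intro t ht
          simp only [Finset.mem_range] at ht
          interval_cases t <;> norm_num
      · have hs : s = 2*m := by omega
        subst hs
        rw [cnt_two_mul 1 m (Or.inl rfl), cnt_two_mul 3 m (Or.inr rfl), ds_two_mul m (by omega)]
        exact ih m (by omega)
    · rcases Nat.even_or_odd m with ⟨u, hu⟩ | ⟨u, hu⟩
      · have hs : s = 2*(2*u)+1 := by omega
        subst hs
        rw [cnt_odd_of_even, cnt_odd_of_even, show (2:ℕ)*u = m from by omega, ds_odd]
        rcases ih m (by omega) with ⟨h1, h3⟩ | ⟨h1, h3⟩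
        · left
          rw [h1, h3]
          exact ⟨by ring, rfl⟩
        · right
          rw [h1]
          exact ⟨rfl, by omega⟩
      · right
        have hs : s = 2*(2*u+1)+1 := by omega
        subst hs
        exact cnt_odd_of_odd u

theorem granville_row_counts (s : ℕ) :
    (((Finset.range (s + 1)).filter (fun t => Nat.choose s t % 4 = 3)).card = 0 →
      ((Finset.range (s + 1)).filter (fun t => Nat.choose s t % 4 = 1)).card =
        2 ^ (Nat.digits 2 s).sum) ∧
    (((Finset.range (s + 1)).filter (fun t => Nat.choose s t % 4 = 3)).card ≠ 0 →
      ((Finset.range (s + 1)).filter (fun t => Nat.choose s t % 4 = 1)).card =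
        ((Finset.range (s + 1)).filter (fun t => Nat.choose s t % 4 = 3)).card) := by
  have h := main s
  rw [cnt_def, cnt_def] at h
  constructor
  · intro h3
    rcases h with ⟨h1, _⟩ | ⟨_, hne⟩
    · exact h1
    · exact absurd h3 hne
  · intro h3
    rcases h with ⟨_, h0⟩ | ⟨h1, _⟩
    · exact absurd h0 h3
    · exact h1
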